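/- arXiv:2312.09586 — 3 statements merged into one kernel-verified Lean document; each statement's English description precedes it below -/
import Mathlib

section
/- Let (Y, μ) be a measure space, Θ ⊆ ℝ^d open, and p : Θ × Y → (0, ∞) three times differentiable in θ for μ-almost every y. Fix θ ∈ Θ and indices b, c, d, and suppose: (i) ∫ ∂_b ∂_c ∂_d p(y;θ) dμ(y) = 0; (ii) g_{cd}(θ') = ∫ (∂_c p)(∂_d p)/p dμ is differentiable at θ with ∂_b g_{cd}(θ) = ∫ ∂_b[(∂_c p)(∂_d p)/p] dμ; and (iii) the integrands defining all m-connection coefficients Γ^{(m)} with indices among {b,c,d}, the skewness tensor T_{bcd}, the e-connection coefficient Γ^{(e)}_{cdb}, and y ↦ p(y;θ) ∂_b ∂_c ∂_d log p(y;θ) are μ-integrable. Then the Bartlett identity holds: ∫ p(y;θ) ∂_b ∂_c ∂_d log p(y;θ) dμ(y) = − ∂_b g_{cd}(θ) − Γ^{(e)}_{cdb}(θ). -/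
open MeasureTheory

/-- Partial derivative of `f : ℝ^n → ℝ` along the `a`-th coordinate. -/
noncomputable def pder {n : ℕ} (a : Fin n) (f : (Fin n → ℝ) → ℝ) (θ : Fin n → ℝ) : ℝ :=
  fderiv ℝ f θ (Pi.single a 1)

/-- Fisher information matrix component `g_{cd}(θ) = ∫ (∂_c p)(∂_d p)/p dμ`. -/
noncomputable def fisherComp {n : ℕ} {Y : Type*} [MeasurableSpace Y] (μ : Measure Y)
    (p : (Fin n → ℝ) → Y → ℝ) (c d : Fin n) (θ : Fin n → ℝ) : ℝ :=
  ∫ y, pder c (fun θ' => p θ' y) θ * pder d (fun θ' => p θ' y) θ / p θ y ∂μ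

/-- Integrand of the m-connection coefficient `Γ^{(m)}_{abc}`. -/
noncomputable def mConnIntegrand {n : ℕ} {Y : Type*}
    (p : (Fin n → ℝ) → Y → ℝ) (a b c : Fin n) (θ : Fin n → ℝ) (y : Y) : ℝ :=
  pder a (fun θ' => pder b (fun θ'' => p θ'' y) θ') θ *
    pder c (fun θ' => p θ' y) θ / p θ y

/-- The e-connection coefficient `Γ^{(e)}_{abc}(θ) = ∫ p (∂_a∂_b log p)(∂_c log p) dμ`. -/
noncomputable def eConn {n : ℕ} {Y : Type*} [MeasurableSpace Y] (μ : Measure Y)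
    (p : (Fin n → ℝ) → Y → ℝ) (a b c : Fin n) (θ : Fin n → ℝ) : ℝ :=
  ∫ y, p θ y * pder a (fun θ' => pder b (fun θ'' => Real.log (p θ'' y)) θ') θ *
    pder c (fun θ' => Real.log (p θ' y)) θ ∂μ

/-!
For each `y`, `f = p(·; y)` satisfies `f ∂_c∂_d log f = ∂_c∂_d f - ∂_c f ∂_d f / f` near `θ`.
Differentiating this in direction `b`
and writing `∂_b f = f ∂_b log f` gives
`f ∂_b∂_c∂_d log f = ∂_b∂_c∂_d f - ∂_b (∂_c f ∂_d f / f) - f (∂_c∂_d log f)(∂_b log f)`.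
Integrating, the first term vanishes by (i), the second is `∂_b g_{cd}` by (ii) and the third is
`Γ^{(e)}_{cdb}`.
-/

open Filter Topology

section PartialDerivatives

variable {n : ℕ} {f g : (Fin n → ℝ) → ℝ} {x : Fin n → ℝ} {a : Fin n}

lemma pder_congr_of_eventuallyEq (hfg : f =ᶠ[𝓝 x] g) : pder a f x = pder a g x := by
  rw [pder, pder, hfg.fderiv_eq]

lemma pder_mul (hf : DifferentiableAt ℝ f x) (hg : DifferentiableAt ℝ g x) :
    pder a (fun y => f y * g y) x = f x * pder a g x + g x * pder a f x := by
  simp [pder, fderiv_fun_mul hf hg]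

lemma pder_sub (hf : DifferentiableAt ℝ f x) (hg : DifferentiableAt ℝ g x) :
    pder a (fun y => f y - g y) x = pder a f x - pder a g x := by
  simp [pder, fderiv_fun_sub hf hg]

lemma pder_inv (hf : DifferentiableAt ℝ f x) (hx : f x ≠ 0) :
    pder a (fun y => (f y)⁻¹) x = -pder a f x / f x ^ 2 := by
  have h : HasFDerivAt (fun y => (f y)⁻¹) ((-(f x ^ 2)⁻¹) • fderiv ℝ f x) x :=
    (hasDerivAt_inv hx).comp_hasFDerivAt x hf.hasFDerivAt
  simp [pder, h.fderiv, smul_eq_mul, div_eq_inv_mul]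

lemma pder_div (hf : DifferentiableAt ℝ f x) (hg : DifferentiableAt ℝ g x) (hx : g x ≠ 0) :
    pder a (fun y => f y / g y) x = (pder a f x * g x - f x * pder a g x) / g x ^ 2 := by
  simp only [div_eq_mul_inv (f _)]
  rw [pder_mul hf (hg.fun_inv hx), pder_inv hg hx]
  field_simp
  ring

lemma pder_log (hf : DifferentiableAt ℝ f x) (hx : f x ≠ 0) :
    pder a (fun y => Real.log (f y)) x = pder a f x / f x := by
  rw [pder, (hf.hasFDerivAt.log hx).fderiv]
  simp [pder, smul_eq_mul, div_eq_inv_mul]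

lemma ContDiffOn.pder {U : Set (Fin n → ℝ)} {k m : WithTop ℕ∞} (hf : ContDiffOn ℝ k f U)
    (hU : IsOpen U) (hmk : m + 1 ≤ k) : ContDiffOn ℝ m (pder a f) U :=
  (hf.fderiv_of_isOpen hU hmk).clm_apply contDiffOn_const

end PartialDerivatives

section Bartlett

variable {n : ℕ} {f : (Fin n → ℝ) → ℝ} {U : Set (Fin n → ℝ)} {x : Fin n → ℝ}

lemma mul_pder_pder_log (hU : IsOpen U) (hf : ContDiffOn ℝ 2 f U) (hpos : ∀ z ∈ U, 0 < f z)
    (hx : x ∈ U) (c d : Fin n) :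
    f x * pder c (fun z => pder d (fun z' => Real.log (f z')) z) x =
      pder c (fun z => pder d f z) x - pder c f x * pder d f x / f x := by
  have hdiff : ∀ z ∈ U, DifferentiableAt ℝ f z := fun z hz =>
    (hf.differentiableOn (by norm_num)).differentiableAt (hU.mem_nhds hz)
  have hlog : (fun z => pder d (fun z' => Real.log (f z')) z) =ᶠ[𝓝 x] fun z => pder d f z / f z :=
    eventually_of_mem (hU.mem_nhds hx) fun z hz => pder_log (hdiff z hz) (hpos z hz).ne'
  have hdf : DifferentiableAt ℝ (pder d f) x :=
    ((hf.pder (m := 1) hU (by norm_num)).differentiableOn (by norm_num)).differentiableAt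
      (hU.mem_nhds hx)
  rw [pder_congr_of_eventuallyEq hlog, pder_div hdf (hdiff x hx) (hpos x hx).ne']
  field_simp [(hpos x hx).ne']

theorem mul_pder_pder_pder_log (hf : ContDiffAt ℝ 3 f x) (hpos : ∀ᶠ z in 𝓝 x, 0 < f z)
    (b c d : Fin n) :
    f x * pder b (fun z => pder c (fun z' => pder d (fun z'' => Real.log (f z'')) z') z) x =
      pder b (fun z => pder c (fun z' => pder d f z') z) x
        - pder b (fun z => pder c f z * pder d f z / f z) x
        - f x * pder c (fun z => pder d (fun z' => Real.log (f z')) z) x *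
          pder b (fun z => Real.log (f z)) x := by
  obtain ⟨u, hu, hfu⟩ := hf.contDiffOn le_rfl (by simp)
  obtain ⟨U, hUsub, hU, hxU⟩ := mem_nhds_iff.mp (inter_mem hu hpos)
  have hfU : ContDiffOn ℝ 3 f U := hfu.mono (hUsub.trans Set.inter_subset_left)
  have hposU : ∀ z ∈ U, 0 < f z := fun z hz => (hUsub hz).2
  have hD : ∀ {g : (Fin n → ℝ) → ℝ}, ContDiffOn ℝ 1 g U → DifferentiableAt ℝ g x :=
    fun hg => (hg.differentiableOn (by norm_num)).differentiableAt (hU.mem_nhds hxU)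
  have hfx : f x ≠ 0 := (hposU x hxU).ne'
  have hfd : DifferentiableAt ℝ f x := hD (hfU.of_le (by norm_num))
  have hf' : ∀ a : Fin n, ContDiffOn ℝ 2 (pder a f) U := fun a => hfU.pder hU (by norm_num)
  have hL : ContDiffOn ℝ 1
      (fun z => pder c (fun z' => pder d (fun z'' => Real.log (f z'')) z') z) U :=
    ((hfU.log fun z hz => (hposU z hz).ne').pder (m := 2) hU (by norm_num)).pder hU
      (by norm_num)
  have hQ : ContDiffOn ℝ 1 (fun z => pder c f z * pder d f z / f z) U :=
    (((hf' c).mul (hf' d)).div (hfU.of_le (by norm_num)) fun z hz => (hposU z hz).ne').of_le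
      (by norm_num)
  have hloc : (fun z => f z * pder c (fun z' => pder d (fun z'' => Real.log (f z'')) z') z)
      =ᶠ[𝓝 x] fun z => pder c (fun z' => pder d f z') z - pder c f z * pder d f z / f z :=
    eventually_of_mem (hU.mem_nhds hxU) fun z hz =>
      mul_pder_pder_log hU (hfU.of_le (by norm_num)) hposU hz c d
  have hprod := pder_congr_of_eventuallyEq (a := b) hloc
  rw [pder_mul hfd (hD hL), pder_sub (hD ((hf' d).pder hU (by norm_num))) (hD hQ)] at hprod
  rw [pder_log hfd hfx]
  field_simp
  linarith

end Bartlett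

theorem stmt_3_general {n : ℕ} {Y : Type*} [MeasurableSpace Y] (μ : Measure Y)
    (Θ : Set (Fin n → ℝ)) (hΘ_open : IsOpen Θ)
    (p : (Fin n → ℝ) → Y → ℝ)
    (hp_pos : ∀ θ' ∈ Θ, ∀ y, 0 < p θ' y)
    (θ : Fin n → ℝ) (hθ : θ ∈ Θ) (b c d : Fin n)
    (h_diff : ∀ᵐ y ∂μ, ContDiffAt ℝ 3 (fun θ' => p θ' y) θ)
    -- (i) the third Bartlett identity for `p`:
    (h_third_int : Integrable (fun y =>
      pder b (fun θ' => pder c (fun θ'' => pder d (fun θ''' => p θ''' y) θ'') θ') θ) μ)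
    (h_third_zero : ∫ y,
      pder b (fun θ' => pder c (fun θ'' => pder d (fun θ''' => p θ''' y) θ'') θ') θ ∂μ = 0)
    -- (ii) differentiation under the integral sign for `g_{cd}`:
    (h_under_int : pder b (fun θ' => fisherComp μ p c d θ') θ =
      ∫ y, pder b (fun θ' =>
        pder c (fun θ'' => p θ'' y) θ' * pder d (fun θ'' => p θ'' y) θ' / p θ' y) θ ∂μ)
    -- (iii) integrability of the relevant integrands:
    (h_int_e : Integrable (fun y =>
      p θ y * pder c (fun θ' => pder d (fun θ'' => Real.log (p θ'' y)) θ') θ *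
        pder b (fun θ' => Real.log (p θ' y)) θ) μ)
    (h_int_log3 : Integrable (fun y =>
      p θ y * pder b (fun θ' =>
        pder c (fun θ'' => pder d (fun θ''' => Real.log (p θ''' y)) θ'') θ') θ) μ) :
    ∫ y, p θ y * pder b (fun θ' =>
        pder c (fun θ'' => pder d (fun θ''' => Real.log (p θ''' y)) θ'') θ') θ ∂μ =
      -pder b (fun θ' => fisherComp μ p c d θ') θ - eConn μ p c d b θ := by
  have hpointwise : ∀ᵐ y ∂μ,
      pder b (fun θ' =>
        pder c (fun θ'' => p θ'' y) θ' * pder d (fun θ'' => p θ'' y) θ' / p θ' y) θ =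
      pder b (fun θ' => pder c (fun θ'' => pder d (fun θ''' => p θ''' y) θ'') θ') θ
        - p θ y * pder b (fun θ' =>
            pder c (fun θ'' => pder d (fun θ''' => Real.log (p θ''' y)) θ'') θ') θ
        - p θ y * pder c (fun θ' => pder d (fun θ'' => Real.log (p θ'' y)) θ') θ *
            pder b (fun θ' => Real.log (p θ' y)) θ := by
    filter_upwards [h_diff] with y hy
    have hpos : ∀ᶠ θ' in 𝓝 θ, 0 < p θ' y :=
      eventually_of_mem (hΘ_open.mem_nhds hθ) fun θ' hθ' => hp_pos θ' hθ' y
    linarith [mul_pder_pder_pder_log hy hpos b c d]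
  rw [h_under_int, integral_congr_ae hpointwise,
    integral_sub (h_third_int.sub' h_int_log3) h_int_e, integral_sub h_third_int h_int_log3,
    h_third_zero, eConn]
  ring

/-- The Bartlett identity
`∫ p ∂_b∂_c∂_d log p dμ = −∂_b g_{cd} − Γ^{(e)}_{cdb}`. -/
theorem stmt_3 {n : ℕ} {Y : Type*} [MeasurableSpace Y] (μ : Measure Y)
    (Θ : Set (Fin n → ℝ)) (hΘ_open : IsOpen Θ)
    (p : (Fin n → ℝ) → Y → ℝ)
    (hp_pos : ∀ θ' ∈ Θ, ∀ y, 0 < p θ' y)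
    (θ : Fin n → ℝ) (hθ : θ ∈ Θ) (b c d : Fin n)
    (h_diff : ∀ᵐ y ∂μ, ContDiffAt ℝ 3 (fun θ' => p θ' y) θ)
    -- (i) the third Bartlett identity for `p`:
    (h_third_int : Integrable (fun y =>
      pder b (fun θ' => pder c (fun θ'' => pder d (fun θ''' => p θ''' y) θ'') θ') θ) μ)
    (h_third_zero : ∫ y,
      pder b (fun θ' => pder c (fun θ'' => pder d (fun θ''' => p θ''' y) θ'') θ') θ ∂μ = 0)
    -- (ii) differentiation under the integral sign for `g_{cd}`:
    (h_g_diff : DifferentiableAt ℝ (fun θ' => fisherComp μ p c d θ') θ)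
    (h_under_int : pder b (fun θ' => fisherComp μ p c d θ') θ =
      ∫ y, pder b (fun θ' =>
        pder c (fun θ'' => p θ'' y) θ' * pder d (fun θ'' => p θ'' y) θ' / p θ' y) θ ∂μ)
    -- (iii) integrability of the relevant integrands:
    (h_int_m : ∀ i j k : Fin n, i ∈ ({b, c, d} : Set (Fin n)) →
      j ∈ ({b, c, d} : Set (Fin n)) → k ∈ ({b, c, d} : Set (Fin n)) →
      Integrable (fun y => mConnIntegrand p i j k θ y) μ)
    (h_int_T : Integrable (fun y =>
      pder b (fun θ' => p θ' y) θ * pder c (fun θ' => p θ' y) θ *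
        pder d (fun θ' => p θ' y) θ / (p θ y) ^ 2) μ)
    (h_int_e : Integrable (fun y =>
      p θ y * pder c (fun θ' => pder d (fun θ'' => Real.log (p θ'' y)) θ') θ *
        pder b (fun θ' => Real.log (p θ' y)) θ) μ)
    (h_int_log3 : Integrable (fun y =>
      p θ y * pder b (fun θ' =>
        pder c (fun θ'' => pder d (fun θ''' => Real.log (p θ''' y)) θ'') θ') θ) μ) :
    ∫ y, p θ y * pder b (fun θ' =>
        pder c (fun θ'' => pder d (fun θ''' => Real.log (p θ''' y)) θ'') θ') θ ∂μ =
      -pder b (fun θ' => fisherComp μ p c d θ') θ - eConn μ p c d b θ :=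
  stmt_3_general μ Θ hΘ_open p hp_pos θ hθ b c d h_diff h_third_int h_third_zero h_under_int h_int_e
    h_int_log3
end

section
/- Let n ∈ ℕ, y_1, …, y_n ∈ ℝ, a > 0, b > 0, S = Σ_{i=1}^n y_i^2, and let L(θ) = Π_{i=1}^n (θ/(2π))^{1/2} exp(−θ y_i^2/2) be the Gaussian likelihood with precision θ. Let π_PM(θ) = θ^{a−1} e^{−bθ} and π_MAP(θ) = θ^a e^{−bθ} on (0, ∞). Then the posterior mean based on π_PM, namely (∫_0^∞ θ π_PM(θ) L(θ) dθ)/(∫_0^∞ π_PM(θ) L(θ) dθ), equals the unique maximizer over (0,∞) of θ ↦ log L(θ) + log π_MAP(θ); both equal (a + n/2)/(b + S/2). That is, the pair (π_PM, π_MAP) is an exactly matching prior pair for this model. -/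
/-!
Under the prior `θ^p e^{-bθ}` the Gaussian likelihood `(θ/2π)^{n/2} e^{-Sθ/2}` produces a kernel
of the same shape, `θ^{p+n/2} e^{-(b+S/2)θ}` up to a constant (Gamma–Gaussian conjugacy). With
`c = a + n/2` and `d = b + S/2`, the `π_PM` posterior is therefore the Gamma(`c`, `d`) law, whose
mean `Γ(c+1) d^{-c-1} / (Γ(c) d^{-c}) = c/d` is a ratio of Gamma integrals; the `π_MAP` log
posterior is `c log θ - dθ` up to a constant, a strictly concave function maximized at `c/d`.
-/

open MeasureTheory Real Set

theorem prod_sqrt_mul_exp_eq_rpow_mul_exp {ι : Type*} [Fintype ι] (y : ι → ℝ) {θ : ℝ}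
    (hθ : 0 ≤ θ) :
    ∏ i, √(θ / (2 * π)) * exp (-θ * y i ^ 2 / 2) =
      (θ / (2 * π)) ^ ((Fintype.card ι : ℝ) / 2) * exp (-((∑ i, y i ^ 2) / 2 * θ)) := by
  rw [Finset.prod_mul_distrib, Finset.prod_const, ← exp_sum, sqrt_eq_rpow,
    ← rpow_natCast, ← rpow_mul (by positivity), Finset.card_univ, ← Finset.sum_div,
    ← Finset.mul_sum]
  ring_nf

theorem rpow_mul_exp_mul_div_rpow_mul_exp {θ C : ℝ} (hθ : 0 < θ) (hC : 0 < C) (p q b s : ℝ) :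
    θ ^ p * exp (-b * θ) * ((θ / C) ^ q * exp (-(s * θ))) =
      C ^ (-q) * (θ ^ (p + q) * exp (-((b + s) * θ))) := by
  rw [div_rpow hθ.le hC.le, rpow_neg hC.le, rpow_add hθ,
    show -((b + s) * θ) = -b * θ + -(s * θ) by ring, exp_add, div_eq_mul_inv]
  ring

theorem integral_mul_rpow_mul_exp_div_integral_rpow_mul_exp {c d : ℝ} (hc : 0 < c)
    (hd : 0 < d) :
    (∫ θ in Ioi (0 : ℝ), θ * (θ ^ (c - 1) * exp (-(d * θ)))) /
        ∫ θ in Ioi (0 : ℝ), θ ^ (c - 1) * exp (-(d * θ)) = c / d := by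
  have hshift : ∀ θ ∈ Ioi (0 : ℝ),
      θ * (θ ^ (c - 1) * exp (-(d * θ))) = θ ^ (c + 1 - 1) * exp (-(d * θ)) := by
    intro θ (hθ : 0 < θ)
    rw [add_sub_cancel_right, ← mul_assoc, mul_comm θ, ← rpow_add_one hθ.ne', sub_add_cancel]
  rw [setIntegral_congr_fun measurableSet_Ioi hshift,
    integral_rpow_mul_exp_neg_mul_Ioi (by linarith) hd, integral_rpow_mul_exp_neg_mul_Ioi hc hd,
    Gamma_add_one hc.ne', rpow_add_one (by positivity)]
  have := Gamma_pos_of_pos hc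
  field_simp

theorem mul_log_sub_mul_lt_of_ne {c d θ : ℝ} (hc : 0 < c) (hd : 0 < d) (hθ : 0 < θ)
    (hne : θ ≠ c / d) :
    c * log θ - d * θ < c * log (c / d) - d * (c / d) := by
  have hcd : 0 < c / d := div_pos hc hd
  have hlog : log θ - log (c / d) < θ / (c / d) - 1 := by
    rw [← log_div hθ.ne' hcd.ne']
    exact log_lt_sub_one_of_pos (by positivity) (by rwa [ne_eq, div_eq_one_iff_eq hcd.ne'])
  have hscaled := mul_lt_mul_of_pos_left hlog hc
  have h1 : c * (θ / (c / d)) = d * θ := by field_simp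
  have h2 : d * (c / d) = c := by field_simp
  linarith

/-- Exact matching prior pair for the zero-mean Gaussian model with precision `θ`:
the posterior mean based on `π_PM(θ) = θ^{a−1} e^{−bθ}` equals the unique maximizer of
`log L + log π_MAP` with `π_MAP(θ) = θ^a e^{−bθ}`; both equal `(a + n/2)/(b + S/2)`. -/
theorem stmt_11 (n : ℕ) (y : Fin n → ℝ) (a b : ℝ) (ha : 0 < a) (hb : 0 < b)
    (S : ℝ) (hS : S = ∑ i, (y i) ^ 2)
    (L πPM πMAP : ℝ → ℝ)
    (hL : ∀ θ : ℝ, L θ = ∏ i, Real.sqrt (θ / (2 * Real.pi)) * Real.exp (-θ * (y i) ^ 2 / 2))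
    (hPM : ∀ θ : ℝ, πPM θ = θ ^ (a - 1) * Real.exp (-b * θ))
    (hMAP : ∀ θ : ℝ, πMAP θ = θ ^ a * Real.exp (-b * θ)) :
    -- the posterior mean based on π_PM:
    (∫ θ in Set.Ioi (0 : ℝ), θ * πPM θ * L θ) / (∫ θ in Set.Ioi (0 : ℝ), πPM θ * L θ) =
      (a + n / 2) / (b + S / 2) ∧
    -- ... equals the unique maximizer over (0, ∞) of the log posterior based on π_MAP:
    (a + n / 2) / (b + S / 2) ∈ Set.Ioi (0 : ℝ) ∧
    ∀ θ ∈ Set.Ioi (0 : ℝ), θ ≠ (a + n / 2) / (b + S / 2) →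
      Real.log (L θ) + Real.log (πMAP θ) <
        Real.log (L ((a + n / 2) / (b + S / 2))) +
          Real.log (πMAP ((a + n / 2) / (b + S / 2))) := by
  have hS0 : 0 ≤ S := hS ▸ Finset.sum_nonneg fun i _ => sq_nonneg _
  set c : ℝ := a + n / 2
  set d : ℝ := b + S / 2
  have hc : 0 < c := by positivity
  have hd : 0 < d := by positivity
  set K : ℝ := (2 * π) ^ (-((n : ℝ) / 2))
  have hK : 0 < K := by positivity
  have hlik : ∀ θ, 0 < θ → L θ = (θ / (2 * π)) ^ ((n : ℝ) / 2) * exp (-(S / 2 * θ)) := by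
    intro θ hθ
    rw [hL, prod_sqrt_mul_exp_eq_rpow_mul_exp y hθ.le, Fintype.card_fin, hS]
  have hpost (p : ℝ) : ∀ θ ∈ Ioi (0 : ℝ),
      θ ^ p * exp (-b * θ) * L θ = K * (θ ^ (p + n / 2) * exp (-(d * θ))) := by
    intro θ (hθ : 0 < θ)
    rw [hlik θ hθ, rpow_mul_exp_mul_div_rpow_mul_exp hθ (by positivity)]
  have hmean : (∫ θ in Ioi (0 : ℝ), θ * πPM θ * L θ) / (∫ θ in Ioi (0 : ℝ), πPM θ * L θ) =
      c / d := by
    have hPMpost : ∀ θ ∈ Ioi (0 : ℝ), πPM θ * L θ = K * (θ ^ (c - 1) * exp (-(d * θ))) := by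
      intro θ hθ
      rw [hPM, hpost _ θ hθ, sub_add_eq_add_sub]
    rw [setIntegral_congr_fun measurableSet_Ioi hPMpost,
      setIntegral_congr_fun measurableSet_Ioi fun θ hθ => by
        rw [mul_assoc, hPMpost θ hθ, mul_left_comm],
      integral_const_mul, integral_const_mul, mul_div_mul_left _ _ hK.ne',
      integral_mul_rpow_mul_exp_div_integral_rpow_mul_exp hc hd]
  have hlogpost : ∀ θ, 0 < θ → log (L θ) + log (πMAP θ) = log K + (c * log θ - d * θ) := by
    intro θ hθ
    rw [← log_mul (hlik θ hθ ▸ by positivity) (hMAP θ ▸ by positivity), mul_comm, hMAP,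
      hpost a θ hθ, log_mul hK.ne' (by positivity), log_mul (by positivity) (by positivity),
      log_rpow hθ, log_exp]
    ring
  refine ⟨hmean, div_pos hc hd, fun θ (hθ : 0 < θ) hne => ?_⟩
  rw [hlogpost θ hθ, hlogpost _ (div_pos hc hd)]
  exact add_lt_add_right (mul_log_sub_mul_lt_of_ne hc hd hθ hne) _
end

section
/- Let n ∈ ℕ with n ≥ 1, a > 0, b > 0, and S_y ≥ 0. The function f : (0, ∞) → ℝ defined by f(λ) = (a + S_y) log λ − (b + n) λ attains a strict global maximum at λ* = (a + S_y)/(b + n), and λ* is its unique maximizer on (0, ∞). Consequently, in the Poisson model with data y_1, …, y_n ∈ ℕ and S_y = Σ y_i, the posterior mean based on the Gamma(a, b) prior π_PM(λ) ∝ λ^{a−1} e^{−bλ} coincides exactly with the MAP estimate based on the prior π_MAP(λ) = λ π_PM(λ) ∝ λ^a e^{−bλ}: both equal (a + S_y)/(b + n). -/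
/-!
Since `log x < x - 1` for `x ≠ 1`, taking `x = dλ / c` shows that `c log λ - dλ` has its strict
global maximum at `λ* = c / d`. The Poisson likelihood times a prior `λ^p e^{-bλ}` is, up to the
constant `∏ yᵢ!`, the Gamma kernel `λ^{p + S_y} e^{-(b+n)λ}`. With `c = a + S_y` and `d = b + n`:
for `p = a - 1` the posterior mean is the mean `c / d` of `Gamma(c, d)`, by `Γ(c + 1) = c Γ(c)`;
for `p = a` the log posterior is `c log λ - dλ` plus a constant.
-/

open MeasureTheory Real Set

theorem mul_log_sub_mul_lt_of_ne_div {c d x : ℝ} (hc : 0 < c) (hd : 0 < d) (hx : 0 < x)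
    (hne : x ≠ c / d) : c * log x - d * x < c * log (c / d) - d * (c / d) := by
  have hratio : d * x / c ≠ 1 := fun h => hne (by field_simp at h ⊢; linarith)
  have hlog := log_lt_sub_one_of_pos (by positivity) hratio
  rw [log_div (by positivity) hc.ne', log_mul hd.ne' hx.ne'] at hlog
  rw [log_div hc.ne' hd.ne', mul_div_cancel₀ c hd.ne']
  have hscaled := mul_lt_mul_of_pos_left hlog hc
  rw [mul_sub c (d * x / c), mul_div_cancel₀ (d * x) hc.ne'] at hscaled
  linarith

theorem integral_mul_gammaKernel_div_integral_gammaKernel {c d : ℝ} (hc : 0 < c) (hd : 0 < d) :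
    (∫ t in Ioi (0 : ℝ), t * (t ^ (c - 1) * exp (-(d * t)))) /
      (∫ t in Ioi (0 : ℝ), t ^ (c - 1) * exp (-(d * t))) = c / d := by
  have hshift : ∫ t in Ioi (0 : ℝ), t * (t ^ (c - 1) * exp (-(d * t))) =
      ∫ t in Ioi (0 : ℝ), t ^ (c + 1 - 1) * exp (-(d * t)) := by
    refine setIntegral_congr_fun measurableSet_Ioi fun t (ht : 0 < t) => ?_
    rw [add_sub_cancel_right, ← mul_assoc, ← rpow_one_add' ht.le (by linarith), add_sub_cancel]
  rw [hshift, integral_rpow_mul_exp_neg_mul_Ioi (by linarith) hd,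
    integral_rpow_mul_exp_neg_mul_Ioi hc hd, Gamma_add_one hc.ne', rpow_add_one (by positivity)]
  have hGamma : 0 < Gamma c := Gamma_pos_of_pos hc
  have hpow : 0 < (1 / d) ^ c := by positivity
  field_simp

theorem rpow_mul_exp_mul_prod_poisson {ι : Type*} [Fintype ι] (y : ι → ℕ) (p b : ℝ) {t : ℝ}
    (ht : 0 < t) :
    t ^ p * exp (-b * t) * ∏ i, t ^ y i * exp (-t) / (y i).factorial =
      (∏ i, ((y i).factorial : ℝ))⁻¹ *
        (t ^ (p + ∑ i, (y i : ℝ)) * exp (-((b + Fintype.card ι) * t))) := by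
  rw [Finset.prod_div_distrib, Finset.prod_mul_distrib, Finset.prod_const,
    Finset.prod_pow_eq_pow_sum, Finset.card_univ, ← exp_nat_mul, ← rpow_natCast,
    rpow_add ht, Nat.cast_sum]
  rw [show -((b + Fintype.card ι) * t) = -b * t + Fintype.card ι * -t by ring, exp_add]
  ring

theorem stmt_13_general (n : ℕ) (y : Fin n → ℕ) (a b : ℝ) (ha : 0 < a) (hb : 0 < b)
    (Sy : ℝ) (hSy : Sy = ∑ i, (y i : ℝ))
    (f L πPM πMAP : ℝ → ℝ)
    (hf : ∀ lam : ℝ, f lam = (a + Sy) * Real.log lam - (b + n) * lam)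
    (hL : ∀ lam : ℝ, L lam = ∏ i, lam ^ (y i) * Real.exp (-lam) / (Nat.factorial (y i)))
    (hPM : ∀ lam : ℝ, πPM lam = lam ^ (a - 1) * Real.exp (-b * lam))
    (hMAP : ∀ lam : ℝ, πMAP lam = lam ^ a * Real.exp (-b * lam)) :
    -- λ* is positive and is the unique strict global maximizer of f on (0, ∞):
    (a + Sy) / (b + n) ∈ Set.Ioi (0 : ℝ) ∧
    (∀ lam ∈ Set.Ioi (0 : ℝ), lam ≠ (a + Sy) / (b + n) →
      f lam < f ((a + Sy) / (b + n))) ∧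
    -- the posterior mean based on π_PM equals λ*:
    (∫ lam in Set.Ioi (0 : ℝ), lam * πPM lam * L lam) /
        (∫ lam in Set.Ioi (0 : ℝ), πPM lam * L lam) = (a + Sy) / (b + n) ∧
    -- and λ* is the unique maximizer of the log posterior based on π_MAP:
    ∀ lam ∈ Set.Ioi (0 : ℝ), lam ≠ (a + Sy) / (b + n) →
      Real.log (L lam) + Real.log (πMAP lam) <
        Real.log (L ((a + Sy) / (b + n))) + Real.log (πMAP ((a + Sy) / (b + n))) := by
  have hc : 0 < a + Sy := by rw [hSy]; positivity
  have hd : 0 < b + n := by positivity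
  set C : ℝ := ∏ i, ((y i).factorial : ℝ)
  have hC : 0 < C := by positivity
  have hposterior (p : ℝ) {t : ℝ} (ht : 0 < t) : t ^ p * exp (-b * t) * L t =
      C⁻¹ * (t ^ (p + Sy) * exp (-((b + n) * t))) := by
    simpa only [hL, hSy, Fintype.card_fin] using rpow_mul_exp_mul_prod_poisson y p b ht
  have hmax : ∀ lam ∈ Ioi (0 : ℝ), lam ≠ (a + Sy) / (b + n) → f lam < f ((a + Sy) / (b + n)) :=
    fun lam hlam hne => by simpa only [hf] using mul_log_sub_mul_lt_of_ne_div hc hd hlam hne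
  have hlogPosterior {t : ℝ} (ht : 0 < t) : log (L t) + log (πMAP t) = f t - log C := by
    have hLt : 0 < L t := by rw [hL]; positivity
    rw [← log_mul hLt.ne' (by rw [hMAP]; positivity), mul_comm, hMAP, hposterior a ht, hf,
      log_mul (by positivity) (by positivity), log_inv, log_mul (by positivity) (by positivity),
      log_rpow ht, log_exp]
    ring
  refine ⟨div_pos hc hd, hmax, ?_, fun lam hlam hne => ?_⟩
  · have hnum : ∫ t in Ioi (0 : ℝ), t * πPM t * L t =
        ∫ t in Ioi (0 : ℝ), C⁻¹ * (t * (t ^ (a + Sy - 1) * exp (-((b + n) * t)))) :=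
      setIntegral_congr_fun measurableSet_Ioi fun t (ht : 0 < t) => by
        rw [mul_assoc, hPM, hposterior _ ht, sub_add_eq_add_sub, mul_left_comm]
    have hden : ∫ t in Ioi (0 : ℝ), πPM t * L t =
        ∫ t in Ioi (0 : ℝ), C⁻¹ * (t ^ (a + Sy - 1) * exp (-((b + n) * t))) :=
      setIntegral_congr_fun measurableSet_Ioi fun t (ht : 0 < t) => by
        rw [hPM, hposterior _ ht, sub_add_eq_add_sub]
    rw [hnum, hden, integral_const_mul, integral_const_mul,
      mul_div_mul_left _ _ (inv_ne_zero hC.ne'),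
      integral_mul_gammaKernel_div_integral_gammaKernel hc hd]
  · rw [hlogPosterior hlam, hlogPosterior (div_pos hc hd)]
    linarith [hmax lam hlam hne]

/-- The function `f(λ) = (a + S_y) log λ − (b + n) λ` attains a strict global maximum on
`(0,∞)` at `λ* = (a + S_y)/(b + n)`, its unique maximizer. Consequently, in the Poisson
model the posterior mean based on the `Gamma(a,b)` prior `π_PM(λ) = λ^{a−1}e^{−bλ}`
coincides exactly with the MAP estimate based on `π_MAP(λ) = λ π_PM(λ)`:
both equal `(a + S_y)/(b + n)`. -/
theorem stmt_13 (n : ℕ) (hn : 1 ≤ n) (y : Fin n → ℕ) (a b : ℝ) (ha : 0 < a) (hb : 0 < b)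
    (Sy : ℝ) (hSy : Sy = ∑ i, (y i : ℝ))
    (f L πPM πMAP : ℝ → ℝ)
    (hf : ∀ lam : ℝ, f lam = (a + Sy) * Real.log lam - (b + n) * lam)
    (hL : ∀ lam : ℝ, L lam = ∏ i, lam ^ (y i) * Real.exp (-lam) / (Nat.factorial (y i)))
    (hPM : ∀ lam : ℝ, πPM lam = lam ^ (a - 1) * Real.exp (-b * lam))
    (hMAP : ∀ lam : ℝ, πMAP lam = lam ^ a * Real.exp (-b * lam)) :
    -- λ* is positive and is the unique strict global maximizer of f on (0, ∞):
    (a + Sy) / (b + n) ∈ Set.Ioi (0 : ℝ) ∧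
    (∀ lam ∈ Set.Ioi (0 : ℝ), lam ≠ (a + Sy) / (b + n) →
      f lam < f ((a + Sy) / (b + n))) ∧
    -- the posterior mean based on π_PM equals λ*:
    (∫ lam in Set.Ioi (0 : ℝ), lam * πPM lam * L lam) /
        (∫ lam in Set.Ioi (0 : ℝ), πPM lam * L lam) = (a + Sy) / (b + n) ∧
    -- and λ* is the unique maximizer of the log posterior based on π_MAP:
    ∀ lam ∈ Set.Ioi (0 : ℝ), lam ≠ (a + Sy) / (b + n) →
      Real.log (L lam) + Real.log (πMAP lam) <
        Real.log (L ((a + Sy) / (b + n))) + Real.log (πMAP ((a + Sy) / (b + n))) :=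
  stmt_13_general n y a b ha hb Sy hSy f L πPM πMAP hf hL hPM hMAP
end
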